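/- arXiv:2501.07607 — 2 statements merged into one kernel-verified Lean document; each statement's English description precedes it below -/
import Mathlib

section
/- Let F ⊆ C^m_{κ,φ}(cl(A)). Then F is compact if and only if Γ_p(F) is compact in C(X, ℝ) for every multi-index p with |p| ≤ m. -/
open Filter Topology MeasureTheory

/-- First-order partial derivative in the `i`-th coordinate direction. -/
noncomputable def pd {n : ℕ} (i : Fin n) (f : (Fin n → ℝ) → ℝ) : (Fin n → ℝ) → ℝ :=
  fun x => fderiv ℝ f x (Pi.single i 1)

/-- The partial derivative `∂_p` associated to a multi-index `p`. -/
noncomputable def mpd {n : ℕ} (p : Fin n → ℕ) (f : (Fin n → ℝ) → ℝ) : (Fin n → ℝ) → ℝ :=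
  (List.finRange n).foldr (fun i g => (pd i)^[p i] g) f

/-- The order `|p|` of a multi-index. -/
def deg {n : ℕ} (p : Fin n → ℕ) : ℕ := ∑ i, p i

/-- `LimAlong S κ g x z`: the limit of `g` along the compactification `κ` (of the set `S`)
at the point `x` is `z`. -/
def LimAlong {α X : Type*} [TopologicalSpace X] (S : Set α) (κ : α → X)
    (g : α → ℝ) (x : X) (z : ℝ) : Prop :=
  Tendsto g (Filter.comap κ (𝓝 x) ⊓ Filter.principal S) (𝓝 z)

/-- Membership in the space `C^m_{κ,φ}(cl A)`: `f` is `C^m` and each weighted derivative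
`∂_p(f/φ)`, `|p| ≤ m`, has a limit along `κ` at every point at infinity. -/
def MemCm {n : ℕ} (m : ℕ) (A : Set (Fin n → ℝ)) {X : Type*} [TopologicalSpace X]
    (κ : (Fin n → ℝ) → X) (φ : (Fin n → ℝ) → ℝ) (f : (Fin n → ℝ) → ℝ) : Prop :=
  ContDiff ℝ (m : ℕ∞) f ∧ ∀ p : Fin n → ℕ, deg p ≤ m →
    ∀ x : X, x ∉ κ '' closure A → ∃ z : ℝ,
      LimAlong (closure A) κ (fun y => mpd p (fun w => f w / φ w) y) x z

/-- The norm `‖f‖_{κ,φ} = max_{|p| ≤ m} ‖∂_p(f/φ)‖_∞` (sup over `cl A`). -/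
noncomputable def normK {n : ℕ} (m : ℕ) (A : Set (Fin n → ℝ)) (φ : (Fin n → ℝ) → ℝ)
    (f : (Fin n → ℝ) → ℝ) : ℝ :=
  ⨆ p : {p : Fin n → ℕ // deg p ≤ m}, ⨆ t : closure A, |mpd p.1 (fun w => f w / φ w) t.1|

/-!
Because `κ(cl A)` is dense in `X`, the map `f ↦ (Γ_p f)_{|p| ≤ m}` is an isometry from
`‖·‖_{κ,φ}` into a finite product of copies of `C(X, ℝ)`; so compactness of `F` passes to every
`Γ_p(F)`. Conversely, if every `Γ_p(F)` is compact, a sequence `u_k` in `F` has a subsequence along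
which each `Γ_p u_k` converges uniformly to some `G_p`, where `G_0 = Γ_0 f` with `f ∈ F`. Uniform
convergence of derivatives commutes with differentiation (applied along coordinate lines in the open
set `A`), so induction on `|p|` gives `∂_p(f/φ) = G_p ∘ κ` on `A`, hence `Γ_p f = G_p` by density,
and the subsequence converges to `f` in `‖·‖_{κ,φ}`.
-/

section PartialDerivatives

variable {n : ℕ}

lemma finite_deg_le (n m : ℕ) : Finite {p : Fin n → ℕ // deg p ≤ m} := by
  refine Set.Finite.to_subtype ((Set.finite_Iic fun _ => m).subset fun p (hp : deg p ≤ m) i => ?_)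
  exact (Finset.single_le_sum (fun j _ => Nat.zero_le (p j)) (Finset.mem_univ i)).trans hp

lemma contDiff_pd {k : ℕ} {g : (Fin n → ℝ) → ℝ} (i : Fin n)
    (hg : ContDiff ℝ ((k + 1 : ℕ) : ℕ∞) g) : ContDiff ℝ (k : ℕ∞) (pd i g) :=
  (hg.fderiv_right (by norm_cast)).clm_apply contDiff_const

lemma contDiff_iterate_pd {k j : ℕ} {g : (Fin n → ℝ) → ℝ} (i : Fin n)
    (hg : ContDiff ℝ ((k + j : ℕ) : ℕ∞) g) : ContDiff ℝ (k : ℕ∞) ((pd i)^[j] g) := by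
  induction j generalizing g with
  | zero => simpa using hg
  | succ j ih =>
    rw [Function.iterate_succ_apply]
    exact ih (contDiff_pd i (by rwa [← add_assoc] at hg))

lemma contDiff_foldr_iterate_pd (p : Fin n → ℕ) :
    ∀ (L : List (Fin n)) {k : ℕ} {g : (Fin n → ℝ) → ℝ},
      ContDiff ℝ ((k + (L.map p).sum : ℕ) : ℕ∞) g →
      ContDiff ℝ (k : ℕ∞) (L.foldr (fun i h => (pd i)^[p i] h) g)
  | [], k, g, hg => by simpa using hg
  | i :: L, k, g, hg => by
    refine contDiff_iterate_pd i (contDiff_foldr_iterate_pd p L ?_)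
    rwa [List.map_cons, List.sum_cons, ← add_assoc] at hg

lemma contDiff_mpd {k : ℕ} {p : Fin n → ℕ} {g : (Fin n → ℝ) → ℝ}
    (hg : ContDiff ℝ ((k + deg p : ℕ) : ℕ∞) g) : ContDiff ℝ (k : ℕ∞) (mpd p g) :=
  contDiff_foldr_iterate_pd p _ (by rwa [deg, Fin.sum_univ_def] at hg)

lemma pd_sub {a b : (Fin n → ℝ) → ℝ} (i : Fin n)
    (ha : Differentiable ℝ a) (hb : Differentiable ℝ b) :
    pd i (a - b) = pd i a - pd i b := by
  funext x
  simp [pd, fderiv_sub (ha x) (hb x)]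

lemma iterate_pd_sub {j : ℕ} {a b : (Fin n → ℝ) → ℝ} (i : Fin n)
    (ha : ContDiff ℝ (j : ℕ∞) a) (hb : ContDiff ℝ (j : ℕ∞) b) :
    (pd i)^[j] (a - b) = (pd i)^[j] a - (pd i)^[j] b := by
  induction j generalizing a b with
  | zero => rfl
  | succ j ih =>
    simp only [Function.iterate_succ_apply]
    rw [pd_sub i (ha.differentiable (by simp)) (hb.differentiable (by simp))]
    exact ih (contDiff_pd i ha) (contDiff_pd i hb)

lemma foldr_iterate_pd_sub (p : Fin n → ℕ) :
    ∀ (L : List (Fin n)) {a b : (Fin n → ℝ) → ℝ},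
      ContDiff ℝ (((L.map p).sum : ℕ) : ℕ∞) a → ContDiff ℝ (((L.map p).sum : ℕ) : ℕ∞) b →
      L.foldr (fun i h => (pd i)^[p i] h) (a - b) =
        L.foldr (fun i h => (pd i)^[p i] h) a - L.foldr (fun i h => (pd i)^[p i] h) b
  | [], _, _, _, _ => rfl
  | i :: L, a, b, ha, hb => by
    rw [List.map_cons, List.sum_cons] at ha hb
    have hle : (((L.map p).sum : ℕ∞) : WithTop ℕ∞) ≤ ((p i + (L.map p).sum : ℕ) : ℕ∞) := by
      exact_mod_cast Nat.le_add_left _ _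
    simp only [List.foldr_cons]
    rw [foldr_iterate_pd_sub p L (ha.of_le hle) (hb.of_le hle)]
    exact iterate_pd_sub i (contDiff_foldr_iterate_pd p L ha) (contDiff_foldr_iterate_pd p L hb)

lemma mpd_sub {p : Fin n → ℕ} {a b : (Fin n → ℝ) → ℝ}
    (ha : ContDiff ℝ (deg p : ℕ∞) a) (hb : ContDiff ℝ (deg p : ℕ∞) b) :
    mpd p (a - b) = mpd p a - mpd p b := by
  rw [deg, Fin.sum_univ_def] at ha hb
  exact foldr_iterate_pd_sub p _ ha hb

lemma mpd_of_deg_eq_zero {p : Fin n → ℕ} (hp : deg p = 0) (g : (Fin n → ℝ) → ℝ) :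
    mpd p g = g := by
  refine List.foldr_fixed' (fun i => ?_) _
  rw [Finset.sum_eq_zero_iff.mp hp i (Finset.mem_univ i), Function.iterate_zero_apply]

lemma deg_update_succ (p : Fin n → ℕ) (i : Fin n) :
    deg (Function.update p i (p i + 1)) = deg p + 1 := by
  rw [deg, deg, Finset.sum_update_of_mem (Finset.mem_univ i), Finset.sdiff_singleton_eq_erase,
    ← Finset.add_sum_erase _ p (Finset.mem_univ i)]
  ring

lemma foldr_iterate_pd_update {p : Fin n → ℕ} {i : Fin n} (hz : ∀ j < i, p j = 0) :
    ∀ L : List (Fin n), L.Pairwise (· < ·) → i ∈ L → ∀ g : (Fin n → ℝ) → ℝ,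
      L.foldr (fun j h => (pd j)^[Function.update p i (p i + 1) j] h) g =
        pd i (L.foldr (fun j h => (pd j)^[p j] h) g)
  | [], _, hi, _ => absurd hi List.not_mem_nil
  | a :: L, hL, hi, g => by
    obtain ⟨ha, hL⟩ := List.pairwise_cons.mp hL
    simp only [List.foldr_cons]
    obtain rfl | hai := eq_or_ne i a
    · have hrest : L.foldr (fun j h => (pd j)^[Function.update p i (p i + 1) j] h) g =
          L.foldr (fun j h => (pd j)^[p j] h) g :=
        List.foldr_ext _ _ _ fun j hj _ => by
          rw [Function.update_of_ne (ha j hj).ne']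
      rw [hrest, Function.update_self, Function.iterate_succ_apply']
    · have hiL : i ∈ L := (List.mem_cons.mp hi).resolve_left hai
      have hpa : p a = 0 := hz a (ha i hiL)
      rw [Function.update_of_ne hai.symm, hpa, Function.iterate_zero_apply,
        Function.iterate_zero_apply]
      exact foldr_iterate_pd_update hz L hL hiL g

lemma mpd_update_succ {p : Fin n → ℕ} {i : Fin n} (hz : ∀ j < i, p j = 0)
    (g : (Fin n → ℝ) → ℝ) : mpd (Function.update p i (p i + 1)) g = pd i (mpd p g) :=
  foldr_iterate_pd_update hz _ (List.pairwise_lt_finRange n) (List.mem_finRange i) g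

/-- `pd i` is the outermost operator of `mpd p` for the least `i` with `p i ≠ 0`. -/
lemma exists_mpd_eq_pd_mpd {p : Fin n → ℕ} (hp : deg p ≠ 0) :
    ∃ i p', deg p' + 1 = deg p ∧ ∀ g, mpd p g = pd i (mpd p' g) := by
  obtain ⟨j, hj⟩ : ∃ j, p j ≠ 0 := by
    by_contra! h
    exact hp (Finset.sum_eq_zero fun j _ => h j)
  obtain ⟨i, hi, hmin⟩ :=
    (Finset.univ.filter (p · ≠ 0)).exists_min_image id ⟨j, by simp [hj]⟩
  have hz : ∀ k < i, p k = 0 := fun k hk => by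
    by_contra hk0
    exact (hmin k (by simp [hk0])).not_gt hk
  set p' := Function.update p i (p i - 1) with hp'
  have hupd : Function.update p' i (p' i + 1) = p := by
    rw [hp', Function.update_self, Function.update_idem,
      Nat.sub_add_cancel (Nat.one_le_iff_ne_zero.mpr (by simpa using hi)), Function.update_eq_self]
  refine ⟨i, p', by rw [← deg_update_succ, hupd], fun g => ?_⟩
  conv_lhs => rw [← hupd]
  exact mpd_update_succ (fun k hk => by rw [hp', Function.update_of_ne hk.ne]; exact hz k hk) g

end PartialDerivatives

theorem fderiv_apply_eq_of_tendstoUniformlyOn {𝕜 E G ι : Type*} [NontriviallyNormedField 𝕜]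
    [IsRCLikeNormedField 𝕜] [NormedAddCommGroup E] [NormedSpace 𝕜 E] [NormedAddCommGroup G]
    [NormedSpace 𝕜 G] {l : Filter ι} [l.NeBot] {U : Set E} (hU : IsOpen U) (v : E)
    {g : ι → E → G} {g₀ h : E → G} (hg : ∀ k, Differentiable 𝕜 (g k))
    (hg₀ : Differentiable 𝕜 g₀) (hpt : ∀ y ∈ U, Tendsto (fun k => g k y) l (𝓝 (g₀ y)))
    (hunif : TendstoUniformlyOn (fun k y => fderiv 𝕜 (g k) y v) h l U) {y : E} (hy : y ∈ U) :
    fderiv 𝕜 g₀ y v = h y := by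
  set line : 𝕜 → E := fun t => y + t • v
  have hline0 : line 0 = y := by simp [line]
  have hderiv (f : E → G) (hf : Differentiable 𝕜 f) (t : 𝕜) :
      HasDerivAt (f ∘ line) (fderiv 𝕜 f (line t) v) t := by
    refine (hf (line t)).hasFDerivAt.comp_hasDerivAt t ?_
    simpa only [id, one_smul] using ((hasDerivAt_id t).smul_const v).const_add y
  have hlim := hasDerivAt_of_tendstoUniformlyOn (hU.preimage (by fun_prop)) (hunif.comp line)
    (Eventually.of_forall fun k t _ => hderiv (g k) (hg k) t) (fun t ht => hpt _ ht)
    (show (0 : 𝕜) ∈ line ⁻¹' U by simpa [hline0] using hy)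
  simpa [hline0] using (hderiv g₀ hg₀ 0).unique hlim

lemma ContinuousMap.iSup_norm_comp_eq_norm {α X E : Type*} [TopologicalSpace X] [CompactSpace X]
    [NormedAddCommGroup E] {e : α → X} (he : DenseRange e) (g : C(X, E)) :
    ⨆ a, ‖g (e a)‖ = ‖g‖ := by
  refine le_antisymm (Real.iSup_le (fun a => g.norm_coe_le_norm _) (norm_nonneg g)) ?_
  refine (g.norm_le (Real.iSup_nonneg fun a => norm_nonneg _)).mpr fun x => ?_
  refine he.induction_on x (isClosed_le (by fun_prop) continuous_const) fun a => ?_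
  exact le_ciSup (f := fun a => ‖g (e a)‖) ⟨‖g‖, by rintro _ ⟨b, rfl⟩; exact g.norm_coe_le_norm _⟩ a

lemma ContinuousMap.ext_of_eqOn_image {α X Y : Type*} [TopologicalSpace α] [TopologicalSpace X]
    [TopologicalSpace Y] [T2Space Y] {κ : α → X} {A : Set α} (hκc : ContinuousOn κ (closure A))
    (hκd : Dense (κ '' closure A)) {g h : C(X, Y)} (hgh : ∀ y ∈ A, g (κ y) = h (κ y)) :
    g = h := by
  have hdense : Dense (κ '' A) := (hκd.mono hκc.image_closure).of_closure
  refine ContinuousMap.ext fun x => congrFun (g.continuous.ext_on hdense h.continuous ?_) x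
  rintro _ ⟨y, hy, rfl⟩
  exact hgh y hy

noncomputable instance (n m : ℕ) : Fintype {p : Fin n → ℕ // deg p ≤ m} :=
  have := finite_deg_le n m
  Fintype.ofFinite _

section WeightedTraces

variable {n m : ℕ} {A : Set (Fin n → ℝ)} {X : Type*} [TopologicalSpace X]
  {κ : (Fin n → ℝ) → X} {φ : (Fin n → ℝ) → ℝ} {Γ : (Fin n → ℕ) → ((Fin n → ℝ) → ℝ) → C(X, ℝ)}

def ExtendsWeightedDerivs (m : ℕ) (A : Set (Fin n → ℝ)) (κ : (Fin n → ℝ) → X)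
    (φ : (Fin n → ℝ) → ℝ) (Γ : (Fin n → ℕ) → ((Fin n → ℝ) → ℝ) → C(X, ℝ)) : Prop :=
  ∀ p : Fin n → ℕ, deg p ≤ m → ∀ f : (Fin n → ℝ) → ℝ, MemCm m A κ φ f →
    ∀ y ∈ closure A, Γ p f (κ y) = mpd p (fun w => f w / φ w) y

def weightedTraces (m : ℕ) (Γ : (Fin n → ℕ) → ((Fin n → ℝ) → ℝ) → C(X, ℝ))
    (f : (Fin n → ℝ) → ℝ) : {p : Fin n → ℕ // deg p ≤ m} → C(X, ℝ) :=
  fun p => Γ p.1 f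

lemma MemCm.contDiff_div {f : (Fin n → ℝ) → ℝ} (hf : MemCm m A κ φ f)
    (hφs : ContDiff ℝ (m : ℕ∞) φ) (hφ0 : ∀ x, φ x ≠ 0) :
    ContDiff ℝ (m : ℕ∞) (fun w => f w / φ w) :=
  hf.1.div hφs hφ0

lemma mpd_div_sub_eq (hΓ : ExtendsWeightedDerivs m A κ φ Γ) (hφs : ContDiff ℝ (m : ℕ∞) φ)
    (hφ0 : ∀ x, φ x ≠ 0) {p : Fin n → ℕ} (hp : deg p ≤ m) {u f : (Fin n → ℝ) → ℝ}
    (hu : MemCm m A κ φ u) (hf : MemCm m A κ φ f) {y : Fin n → ℝ} (hy : y ∈ closure A) :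
    mpd p (fun w => (u - f) w / φ w) y = (Γ p u - Γ p f) (κ y) := by
  have hle : ((deg p : ℕ∞) : WithTop ℕ∞) ≤ (m : ℕ∞) := by exact_mod_cast hp
  have hsub : (fun w => (u - f) w / φ w) = (fun w => u w / φ w) - (fun w => f w / φ w) := by
    funext w
    simp [sub_div]
  rw [hsub, mpd_sub ((hu.contDiff_div hφs hφ0).of_le hle) ((hf.contDiff_div hφs hφ0).of_le hle),
    ContinuousMap.sub_apply, hΓ p hp u hu y hy, hΓ p hp f hf y hy, Pi.sub_apply]

variable [CompactSpace X]

lemma normK_sub_eq_dist (hΓ : ExtendsWeightedDerivs m A κ φ Γ) (hκd : Dense (κ '' closure A))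
    (hφs : ContDiff ℝ (m : ℕ∞) φ) (hφ0 : ∀ x, φ x ≠ 0) {u f : (Fin n → ℝ) → ℝ}
    (hu : MemCm m A κ φ u) (hf : MemCm m A κ φ f) :
    normK m A φ (u - f) = dist (weightedTraces m Γ u) (weightedTraces m Γ f) := by
  have hdense : DenseRange fun t : closure A => κ t := by rwa [DenseRange, ← Set.image_eq_range]
  have hinner (p : {p : Fin n → ℕ // deg p ≤ m}) :
      ⨆ t : closure A, |mpd p.1 (fun w => (u - f) w / φ w) t.1| = ‖Γ p.1 u - Γ p.1 f‖ := by
    rw [← (Γ p.1 u - Γ p.1 f).iSup_norm_comp_eq_norm hdense]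
    exact iSup_congr fun t => by rw [mpd_div_sub_eq hΓ hφs hφ0 p.2 hu hf t.2]; rfl
  rw [normK, iSup_congr hinner, dist_eq_norm]
  refine le_antisymm (Real.iSup_le (fun p => ?_) (norm_nonneg _)) ?_
  · exact norm_le_pi_norm (weightedTraces m Γ u - weightedTraces m Γ f) p
  refine (pi_norm_le_iff_of_nonneg (Real.iSup_nonneg fun _ => norm_nonneg _)).mpr fun p => ?_
  exact le_ciSup (f := fun p : {p : Fin n → ℕ // deg p ≤ m} => ‖Γ p.1 u - Γ p.1 f‖)
    (Set.finite_range _).bddAbove p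

lemma mpd_div_eq_of_tendsto (hAo : IsOpen A) (hΓ : ExtendsWeightedDerivs m A κ φ Γ)
    (hφs : ContDiff ℝ (m : ℕ∞) φ) (hφ0 : ∀ x, φ x ≠ 0) {u : ℕ → (Fin n → ℝ) → ℝ}
    (hu : ∀ k, MemCm m A κ φ (u k)) {f : (Fin n → ℝ) → ℝ} (hf : MemCm m A κ φ f)
    {G : {p : Fin n → ℕ // deg p ≤ m} → C(X, ℝ)}
    (hG : ∀ p, Tendsto (fun k => weightedTraces m Γ (u k) p) atTop (𝓝 (G p)))
    (h0 : ∀ p, deg p.1 = 0 → weightedTraces m Γ f p = G p) (p : {p : Fin n → ℕ // deg p ≤ m})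
    {y : Fin n → ℝ} (hy : y ∈ A) : mpd p.1 (fun w => f w / φ w) y = G p (κ y) := by
  suffices ∀ N (p : {p : Fin n → ℕ // deg p ≤ m}), deg p.1 = N →
      ∀ y ∈ A, mpd p.1 (fun w => f w / φ w) y = G p (κ y) from this _ p rfl y hy
  intro N
  induction N with
  | zero =>
    intro p hd y hy
    rw [← h0 p hd, weightedTraces, hΓ p.1 p.2 f hf y (subset_closure hy)]
  | succ N ih =>
    intro ⟨p, hp⟩ (hd : deg p = N + 1) y hy
    obtain ⟨i, p', hp', hmpd⟩ := exists_mpd_eq_pd_mpd (p := p) (by omega)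
    have hp'm : deg p' ≤ m := by omega
    have hdiff {g : (Fin n → ℝ) → ℝ} (hg : MemCm m A κ φ g) :
        Differentiable ℝ (mpd p' fun w => g w / φ w) := by
      refine (contDiff_mpd (k := 1) ((hg.contDiff_div hφs hφ0).of_le ?_)).differentiable (by simp)
      exact_mod_cast (by omega : 1 + deg p' ≤ m)
    rw [hmpd]
    refine fderiv_apply_eq_of_tendstoUniformlyOn (l := atTop) (h := fun z => G ⟨p, hp⟩ (κ z)) hAo
      (Pi.single i 1) (fun k => hdiff (hu k)) (hdiff hf) (fun z hz => ?_) ?_ hy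
    · rw [ih ⟨p', hp'm⟩ (show deg p' = N by omega) z hz]
      simpa only [Function.comp_def, weightedTraces, hΓ p' hp'm _ (hu _) z (subset_closure hz)]
        using ((continuous_eval_const (κ z)).tendsto _).comp (hG ⟨p', hp'm⟩)
    · refine ((ContinuousMap.tendsto_iff_tendstoUniformly.mp (hG ⟨p, hp⟩)).comp
        κ).tendstoUniformlyOn.congr ?_
      filter_upwards with k z hz
      rw [Function.comp_apply, weightedTraces, hΓ p hp (u k) (hu k) z (subset_closure hz), hmpd]
      rfl

lemma isCompact_image_of_forall_exists_tendsto_normK (hΓ : ExtendsWeightedDerivs m A κ φ Γ)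
    (hκd : Dense (κ '' closure A)) (hφs : ContDiff ℝ (m : ℕ∞) φ) (hφ0 : ∀ x, φ x ≠ 0)
    {F : Set ((Fin n → ℝ) → ℝ)} (hF : ∀ f ∈ F, MemCm m A κ φ f)
    (hseq : ∀ u : ℕ → (Fin n → ℝ) → ℝ, (∀ k, u k ∈ F) → ∃ f ∈ F, ∃ ψ : ℕ → ℕ, StrictMono ψ ∧
      Tendsto (fun k => normK m A φ (u (ψ k) - f)) atTop (𝓝 0))
    {p : Fin n → ℕ} (hp : deg p ≤ m) : IsCompact (Γ p '' F) := by
  refine IsSeqCompact.isCompact fun x hx => ?_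
  choose v hvF hvx using hx
  obtain ⟨f, hf, ψ, hψ, hlim⟩ := hseq v hvF
  refine ⟨Γ p f, ⟨f, hf, rfl⟩, ψ, hψ, tendsto_iff_dist_tendsto_zero.mpr ?_⟩
  refine squeeze_zero (fun k => dist_nonneg) (fun k => ?_) hlim
  rw [Function.comp_apply, ← hvx, normK_sub_eq_dist hΓ hκd hφs hφ0 (hF _ (hvF _)) (hF f hf)]
  exact dist_le_pi_dist (weightedTraces m Γ (v (ψ k))) (weightedTraces m Γ f) ⟨p, hp⟩

lemma exists_tendsto_normK_of_isCompact_image (hAo : IsOpen A) (hκc : ContinuousOn κ (closure A))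
    (hκd : Dense (κ '' closure A)) (hΓ : ExtendsWeightedDerivs m A κ φ Γ)
    (hφs : ContDiff ℝ (m : ℕ∞) φ) (hφ0 : ∀ x, φ x ≠ 0) {F : Set ((Fin n → ℝ) → ℝ)}
    (hF : ∀ f ∈ F, MemCm m A κ φ f) (hC : ∀ p, deg p ≤ m → IsCompact (Γ p '' F))
    {u : ℕ → (Fin n → ℝ) → ℝ} (hu : ∀ k, u k ∈ F) :
    ∃ f ∈ F, ∃ ψ : ℕ → ℕ, StrictMono ψ ∧
      Tendsto (fun k => normK m A φ (u (ψ k) - f)) atTop (𝓝 0) := by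
  obtain ⟨G, hG, ψ, hψ, hlim⟩ := (isCompact_univ_pi fun p : {p : Fin n → ℕ // deg p ≤ m} =>
    hC p.1 p.2).tendsto_subseq (x := fun k => weightedTraces m Γ (u k))
      fun k p _ => ⟨u k, hu k, rfl⟩
  obtain ⟨f, hf, hf0⟩ := hG ⟨0, by simp [deg]⟩ (Set.mem_univ _)
  have h0 (p : {p : Fin n → ℕ // deg p ≤ m}) (hp : deg p.1 = 0) :
      weightedTraces m Γ f p = G p := by
    obtain rfl : p = ⟨0, by simp [deg]⟩ :=
      Subtype.ext (funext fun i => Finset.sum_eq_zero_iff.mp hp i (Finset.mem_univ i))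
    exact hf0
  have hfG : weightedTraces m Γ f = G := funext fun p =>
    ContinuousMap.ext_of_eqOn_image hκc hκd fun y hy =>
      (hΓ p.1 p.2 f (hF f hf) y (subset_closure hy)).trans <| mpd_div_eq_of_tendsto hAo hΓ hφs hφ0
        (fun k => hF _ (hu (ψ k))) (hF f hf) (tendsto_pi_nhds.mp hlim) h0 p hy
  refine ⟨f, hf, ψ, hψ, ?_⟩
  simp_rw [normK_sub_eq_dist hΓ hκd hφs hφ0 (hF _ (hu _)) (hF f hf), hfG]
  exact tendsto_iff_dist_tendsto_zero.mp hlim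

end WeightedTraces

theorem stmt_11_general {n m : ℕ} (A : Set (Fin n → ℝ)) (hAo : IsOpen A)
    {X : Type*} [MetricSpace X] [CompactSpace X]
    (κ : (Fin n → ℝ) → X) (hκc : ContinuousOn κ (closure A))
    (hκd : Dense (κ '' closure A))
    (φ : (Fin n → ℝ) → ℝ) (hφs : ContDiff ℝ (m : ℕ∞) φ) (hφp : ∀ x, 0 < φ x)
    -- `Γ p f ∈ C(X,ℝ)` is the unique continuous extension of `∂_p(f/φ)` through `κ`
    (Γ : (Fin n → ℕ) → ((Fin n → ℝ) → ℝ) → C(X, ℝ))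
    (hΓ : ∀ (p : Fin n → ℕ), deg p ≤ m → ∀ f : (Fin n → ℝ) → ℝ, MemCm m A κ φ f →
      ∀ y ∈ closure A, Γ p f (κ y) = mpd p (fun w => f w / φ w) y)
    (F : Set ((Fin n → ℝ) → ℝ)) (hF : ∀ f ∈ F, MemCm m A κ φ f) :
    -- `F` compact (sequential compactness in the `‖·‖_{κ,φ}` metric) iff all `Γ_p(F)` compact
    ((∀ u : ℕ → (Fin n → ℝ) → ℝ, (∀ k, u k ∈ F) →
        ∃ f ∈ F, ∃ ψ : ℕ → ℕ, StrictMono ψ ∧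
          Tendsto (fun k => normK m A φ (u (ψ k) - f)) atTop (𝓝 0)) ↔
      (∀ p : Fin n → ℕ, deg p ≤ m → IsCompact (Γ p '' F))) :=
  have hφ0 : ∀ x, φ x ≠ 0 := fun x => (hφp x).ne'
  ⟨fun hseq _ hp => isCompact_image_of_forall_exists_tendsto_normK hΓ hκd hφs hφ0 hF hseq hp,
    fun hC _ hu => exists_tendsto_normK_of_isCompact_image hAo hκc hκd hΓ hφs hφ0 hF hC hu⟩

/-- a set `F ⊆ C^m_{κ,φ}(cl A)` is compact (equivalently, sequentially compact
for the metric of the norm `‖·‖_{κ,φ}`) iff `Γ_p(F)` is compact in `C(X,ℝ)` for every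
multi-index `p` with `|p| ≤ m`. -/
theorem stmt_11 {n m : ℕ} (A : Set (Fin n → ℝ)) (hAo : IsOpen A) (hAc : IsConnected A)
    (hAu : ¬ Bornology.IsBounded A) {X : Type*} [MetricSpace X] [CompactSpace X]
    (κ : (Fin n → ℝ) → X) (hκc : ContinuousOn κ (closure A))
    (hκd : Dense (κ '' closure A))
    (hκe : Topology.IsEmbedding ((closure A).restrict κ))
    (φ : (Fin n → ℝ) → ℝ) (hφs : ContDiff ℝ (m : ℕ∞) φ) (hφp : ∀ x, 0 < φ x)
    -- `Γ p f ∈ C(X,ℝ)` is the unique continuous extension of `∂_p(f/φ)` through `κ`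
    (Γ : (Fin n → ℕ) → ((Fin n → ℝ) → ℝ) → C(X, ℝ))
    (hΓ : ∀ (p : Fin n → ℕ), deg p ≤ m → ∀ f : (Fin n → ℝ) → ℝ, MemCm m A κ φ f →
      ∀ y ∈ closure A, Γ p f (κ y) = mpd p (fun w => f w / φ w) y)
    (F : Set ((Fin n → ℝ) → ℝ)) (hF : ∀ f ∈ F, MemCm m A κ φ f) :
    -- `F` compact (sequential compactness in the `‖·‖_{κ,φ}` metric) iff all `Γ_p(F)` compact
    ((∀ u : ℕ → (Fin n → ℝ) → ℝ, (∀ k, u k ∈ F) →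
        ∃ f ∈ F, ∃ ψ : ℕ → ℕ, StrictMono ψ ∧
          Tendsto (fun k => normK m A φ (u (ψ k) - f)) atTop (𝓝 0)) ↔
      (∀ p : Fin n → ℕ, deg p ≤ m → IsCompact (Γ p '' F))) :=
  stmt_11_general A hAo κ hκc hκd φ hφs hφp Γ hΓ F hF
end

section
/- Let φ(x,y) = e^{-x²/2} on cl(A) = [0,∞) × [0,1], and let u: cl(A) → ℝ be continuous and bounded with u(x,y)/φ(x,y) bounded, such that for each y₀ ∈ [0,1] the limit of u(x,y)/φ(x,y) as (x,y) → (∞, y₀) exists. Then for each y₀ ∈ [0,1], lim_{(x,y)→(∞,y₀)} ∫₀^y ∫₀^x e^{-(x-t)²} u(t,s)² dt ds = 0. -/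
open MeasureTheory

/-- with `φ(x,y) = e^{-x²/2}` on `[0,∞)×[0,1]`, if `u` is continuous and
bounded with `u/φ` bounded and `u/φ` having a limit as `(x,y) → (∞,y₀)` for each
`y₀ ∈ [0,1]`, then `∫₀^y ∫₀^x e^{-(x-t)²} u(t,s)² dt ds → 0` as `(x,y) → (∞,y₀)`. -/
theorem stmt_18 (u : ℝ → ℝ → ℝ)
    (hc : ContinuousOn (fun p : ℝ × ℝ => u p.1 p.2) (Set.Ici 0 ×ˢ Set.Icc 0 1))
    (hb : ∃ C : ℝ, ∀ x ∈ Set.Ici (0 : ℝ), ∀ y ∈ Set.Icc (0 : ℝ) 1, |u x y| ≤ C)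
    (hbφ : ∃ C : ℝ, ∀ x ∈ Set.Ici (0 : ℝ), ∀ y ∈ Set.Icc (0 : ℝ) 1,
      |u x y / Real.exp (-x ^ 2 / 2)| ≤ C)
    (hlim : ∀ y₀ ∈ Set.Icc (0 : ℝ) 1, ∃ L : ℝ, ∀ ε > (0 : ℝ), ∃ R > (0 : ℝ), ∃ δ > (0 : ℝ),
      ∀ x > R, ∀ y ∈ Set.Icc (0 : ℝ) 1, |y - y₀| < δ →
        |u x y / Real.exp (-x ^ 2 / 2) - L| < ε) :
    ∀ y₀ ∈ Set.Icc (0 : ℝ) 1, ∀ ε > (0 : ℝ), ∃ R > (0 : ℝ), ∃ δ > (0 : ℝ),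
      ∀ x > R, ∀ y ∈ Set.Icc (0 : ℝ) 1, |y - y₀| < δ →
        |∫ s in (0 : ℝ)..y, ∫ t in (0 : ℝ)..x, Real.exp (-(x - t) ^ 2) * u t s ^ 2| < ε := by
  obtain ⟨C, hC⟩ := hbφ
  have hC0 : 0 ≤ C := le_trans (abs_nonneg _) (hC 0 (by norm_num) 0 (by norm_num))
  intro y₀ hy₀ ε hε
  refine ⟨max 1 (16 * C ^ 2 / ε + 1), lt_of_lt_of_le one_pos (le_max_left _ _), 1, one_pos,
    ?_⟩
  intro x hx y hy _
  have hx1 : (1 : ℝ) < x := lt_of_le_of_lt (le_max_left _ _) hx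
  have hx2 : 16 * C ^ 2 / ε + 1 < x := lt_of_le_of_lt (le_max_right _ _) hx
  have hx0 : (0 : ℝ) < x := lt_trans one_pos hx1
  -- pointwise bound on the integrand
  have key : ∀ t ∈ Set.uIoc (0 : ℝ) x, ∀ s ∈ Set.Icc (0 : ℝ) 1,
      |Real.exp (-(x - t) ^ 2) * u t s ^ 2| ≤ C ^ 2 * Real.exp (-x ^ 2 / 2) := by
    intro t ht s hs
    rw [Set.uIoc_of_le hx0.le] at ht
    have ht0 : (0 : ℝ) ≤ t := ht.1.le
    have hu := hC t ht0 s hs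
    rw [abs_div, abs_of_pos (Real.exp_pos _), div_le_iff₀ (Real.exp_pos _)] at hu
    have hsq : u t s ^ 2 ≤ C ^ 2 * Real.exp (-t ^ 2) := by
      have h2 : Real.exp (-t ^ 2 / 2) * Real.exp (-t ^ 2 / 2) = Real.exp (-t ^ 2) := by
        rw [← Real.exp_add]; ring_nf
      nlinarith [abs_nonneg (u t s), sq_abs (u t s), Real.exp_pos (-t ^ 2 / 2)]
    have hmul : Real.exp (-(x - t) ^ 2) * Real.exp (-t ^ 2) ≤ Real.exp (-x ^ 2 / 2) := by
      rw [← Real.exp_add]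
      exact Real.exp_le_exp.2 (by nlinarith [sq_nonneg (x - 2 * t)])
    have hE := Real.exp_pos (-(x - t) ^ 2)
    rw [abs_of_nonneg (by positivity)]
    calc Real.exp (-(x - t) ^ 2) * u t s ^ 2
        ≤ Real.exp (-(x - t) ^ 2) * (C ^ 2 * Real.exp (-t ^ 2)) := by
          exact mul_le_mul_of_nonneg_left hsq hE.le
      _ = C ^ 2 * (Real.exp (-(x - t) ^ 2) * Real.exp (-t ^ 2)) := by ring
      _ ≤ C ^ 2 * Real.exp (-x ^ 2 / 2) := by
          exact mul_le_mul_of_nonneg_left hmul (by positivity)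
  -- bound the inner integral
  have hin : ∀ s ∈ Set.uIoc (0 : ℝ) y,
      |∫ t in (0 : ℝ)..x, Real.exp (-(x - t) ^ 2) * u t s ^ 2|
        ≤ C ^ 2 * Real.exp (-x ^ 2 / 2) * x := by
    intro s hsmem
    have hs : s ∈ Set.Icc (0 : ℝ) 1 := by
      rw [Set.uIoc_of_le hy.1] at hsmem
      exact ⟨hsmem.1.le, le_trans hsmem.2 hy.2⟩
    have := intervalIntegral.norm_integral_le_of_norm_le_const
      (C := C ^ 2 * Real.exp (-x ^ 2 / 2))
      (f := fun t => Real.exp (-(x - t) ^ 2) * u t s ^ 2) (a := (0 : ℝ)) (b := x)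
      (fun t ht => key t ht s hs)
    simpa [Real.norm_eq_abs, abs_of_pos hx0] using this
  -- bound the outer integral
  have hout : |∫ s in (0 : ℝ)..y, ∫ t in (0 : ℝ)..x, Real.exp (-(x - t) ^ 2) * u t s ^ 2|
      ≤ C ^ 2 * Real.exp (-x ^ 2 / 2) * x := by
    have := intervalIntegral.norm_integral_le_of_norm_le_const
      (C := C ^ 2 * Real.exp (-x ^ 2 / 2) * x)
      (f := fun s => ∫ t in (0 : ℝ)..x, Real.exp (-(x - t) ^ 2) * u t s ^ 2)
      (a := (0 : ℝ)) (b := y) (fun s hs => hin s hs)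
    rw [Real.norm_eq_abs] at this
    calc |∫ s in (0 : ℝ)..y, ∫ t in (0 : ℝ)..x, Real.exp (-(x - t) ^ 2) * u t s ^ 2|
        ≤ C ^ 2 * Real.exp (-x ^ 2 / 2) * x * |y - 0| := this
      _ ≤ C ^ 2 * Real.exp (-x ^ 2 / 2) * x * 1 := by
          apply mul_le_mul_of_nonneg_left _ (by positivity)
          rw [sub_zero, abs_of_nonneg hy.1]; exact hy.2
      _ = C ^ 2 * Real.exp (-x ^ 2 / 2) * x := by ring
  -- show the bound is < ε
  have hexp : x ^ 4 / 16 ≤ Real.exp (x ^ 2 / 2) := by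
    have h1 := Real.add_one_le_exp (x ^ 2 / 4)
    have h2 : Real.exp (x ^ 2 / 2) = Real.exp (x ^ 2 / 4) * Real.exp (x ^ 2 / 4) := by
      rw [← Real.exp_add]; ring_nf
    nlinarith [Real.exp_pos (x ^ 2 / 4), sq_nonneg (x ^ 2 / 4)]
  have hfin : C ^ 2 * Real.exp (-x ^ 2 / 2) * x < ε := by
    have hEp := Real.exp_pos (x ^ 2 / 2)
    have hkey : C ^ 2 * x < ε * Real.exp (x ^ 2 / 2) := by
      have h16 : 16 * C ^ 2 / ε < x := by linarith
      rw [div_lt_iff₀ hε] at h16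
      have h4 : x ^ 2 ≤ x ^ 4 := by nlinarith [mul_nonneg (sq_nonneg x) (show (0:ℝ) ≤ x ^ 2 - 1 by nlinarith)]
      have hA : C ^ 2 * x < ε * (x ^ 4 / 16) := by nlinarith
      have hB : ε * (x ^ 4 / 16) ≤ ε * Real.exp (x ^ 2 / 2) :=
        mul_le_mul_of_nonneg_left hexp hε.le
      linarith
    have : Real.exp (-x ^ 2 / 2) = (Real.exp (x ^ 2 / 2))⁻¹ := by
      rw [← Real.exp_neg]; ring_nf
    rw [this]
    rw [show C ^ 2 * (Real.exp (x ^ 2 / 2))⁻¹ * x = C ^ 2 * x / Real.exp (x ^ 2 / 2) by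
      field_simp]
    rw [div_lt_iff₀ hEp]
    exact hkey
  exact lt_of_le_of_lt hout hfin
end
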